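/- There is an absolute constant c' > 0 with the following property. For every finite simple graph H on k ≥ 1 vertices there exist a constant C with 0 < C ≤ c'·k²·2^{k(k−1)/2} and an integer n₀ ≤ c'·k³·2^{k(k−1)/2} such that for every n > n₀ there exists a simple graph G on n vertices that is (H, C·log n)-universal: every set of at least C·log n vertices of G contains an induced subgraph isomorphic to H. -/

import Mathlib

/-!
Encode a graph on `X` by the indicator `ω : Sym2 X → Bool` of its edge set and count. Identify
any `k·t` vertices with the grid `V × 𝔽` for a field `𝔽` of size `t ≥ k`, after fixing an
injection `c : V ↪ 𝔽`. Each of the `t²` lines `v ↦ (v, a + c v · d)` carries a potential copy of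
`H`; two distinct lines meet in at most one point, so their edge sets are disjoint and the
`t²` events "this line induces `H`" are independent, each of probability `2^{-k(k-1)/2}`. A union
bound over the at most `n^{kt}` embeddings of the grid succeeds once
`t > k · 2^{k(k-1)/2} · log n`, and Bertrand's postulate provides such a prime `t` with
`k t = O(k² · 2^{k(k-1)/2} · log n)`.
-/

open Finset Function Real SimpleGraph

section Counting

variable {I : Type*} [Fintype I] [DecidableEq I]

/-- Swapping the `s`-coordinates of two colourings is an involution carrying `{P ∧ Q} × univ`
onto `{P} × {Q}`. -/
theorem card_filter_and_mul_two_pow (s : Finset I) {P Q : (I → Bool) → Prop}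
    [DecidablePred P] [DecidablePred Q] (hP : DependsOn P s) (hQ : DependsOn Q (↑s)ᶜ) :
    #{ω | P ω ∧ Q ω} * 2 ^ Fintype.card I = #{ω | P ω} * #{ω | Q ω} := by
  have hinvol : ∀ ω ω' : I → Bool, s.piecewise (s.piecewise ω ω') (s.piecewise ω' ω) = ω := by
    intro ω ω'; ext i; by_cases hi : i ∈ s <;> simp [hi]
  have hPs : ∀ ω ω' : I → Bool, P (s.piecewise ω ω') = P ω :=
    fun ω ω' => hP fun i hi => s.piecewise_eq_of_mem _ _ hi
  have hQs : ∀ ω ω' : I → Bool, Q (s.piecewise ω ω') = Q ω' :=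
    fun ω ω' => hQ fun i hi => s.piecewise_eq_of_notMem _ _ hi
  rw [← Fintype.card_bool, ← Fintype.card_fun, ← card_univ, ← card_product, ← card_product]
  refine card_nbij' (fun p => (s.piecewise p.1 p.2, s.piecewise p.2 p.1))
    (fun p => (s.piecewise p.1 p.2, s.piecewise p.2 p.1)) ?_ ?_ ?_ ?_ <;> intro p hp <;> simp_all

theorem card_filter_forall_eq_mul_two_pow (s : Finset I) (σ : I → Bool) :
    #{ω : I → Bool | ∀ i ∈ s, ω i = σ i} * 2 ^ #s = 2 ^ Fintype.card I := by
  have : ({ω : I → Bool | ∀ i ∈ s, ω i = σ i} : Finset _)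
      = Fintype.piFinset fun i => if i ∈ s then {σ i} else univ := by
    ext ω
    simp only [mem_filter, mem_univ, true_and, Fintype.mem_piFinset]
    refine forall_congr' fun i => ?_
    split_ifs with hi <;> simp [hi]
  rw [this, Fintype.card_piFinset]
  simp only [apply_ite card, card_singleton, card_univ, Fintype.card_bool, prod_ite,
    prod_const_one, prod_const, one_mul, ← pow_add, filter_not, filter_mem_eq_inter, univ_inter]
  rw [card_univ_sdiff, Nat.sub_add_cancel (card_le_univ s)]

theorem card_filter_exists_ne_mul_two_pow (s : Finset I) (σ : I → Bool) :
    #{ω : I → Bool | ∃ i ∈ s, ω i ≠ σ i} * 2 ^ #s = 2 ^ Fintype.card I * (2 ^ #s - 1) := by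
  have hsplit :=
    card_filter_add_card_filter_not (s := univ) (fun ω : I → Bool => ∀ i ∈ s, ω i = σ i)
  simp only [not_forall, exists_prop, card_univ, Fintype.card_fun, Fintype.card_bool] at hsplit
  calc _ = (#{ω : I → Bool | ∀ i ∈ s, ω i = σ i} + #{ω : I → Bool | ∃ i ∈ s, ω i ≠ σ i}) * 2 ^ #s
        - #{ω : I → Bool | ∀ i ∈ s, ω i = σ i} * 2 ^ #s := by
          rw [add_mul, Nat.add_sub_cancel_left]
    _ = 2 ^ Fintype.card I * (2 ^ #s - 1) := by
          rw [hsplit, card_filter_forall_eq_mul_two_pow, Nat.mul_sub, mul_one]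

theorem card_filter_forall_exists_ne_mul_le {J : Type*} (B : Finset J) (s : J → Finset I)
    (σ : J → I → Bool) {b : ℕ} (hs : ∀ j ∈ B, #(s j) = b) (hdisj : (B : Set J).PairwiseDisjoint s) :
    #{ω : I → Bool | ∀ j ∈ B, ∃ i ∈ s j, ω i ≠ σ j i} * (2 ^ b) ^ #B
      ≤ 2 ^ Fintype.card I * (2 ^ b - 1) ^ #B := by
  classical
  induction B using Finset.induction_on with
  | empty => simp
  | @insert j₀ B hj₀ ih =>
    rw [coe_insert, Set.pairwiseDisjoint_insert] at hdisj
    have IH := ih (fun j hj => hs j (mem_insert_of_mem hj)) hdisj.1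
    have hP : DependsOn (fun ω : I → Bool => ∃ i ∈ s j₀, ω i ≠ σ j₀ i) (s j₀) := by
      intro ω ω' h
      exact propext (exists_congr fun i => and_congr_right fun hi => by rw [h i hi])
    have hQ : DependsOn (fun ω : I → Bool => ∀ j ∈ B, ∃ i ∈ s j, ω i ≠ σ j i) (↑(s j₀))ᶜ := by
      intro ω ω' h
      refine propext (forall₂_congr fun j hj => exists_congr fun i => and_congr_right fun hi => ?_)
      have hne : j ≠ j₀ := fun h => hj₀ (h ▸ hj)
      rw [h i (disjoint_right.mp (hdisj.2 j hj hne.symm) hi)]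
    have hindep := card_filter_and_mul_two_pow (s j₀) hP hQ
    have hfirst := card_filter_exists_ne_mul_two_pow (s j₀) (σ j₀)
    rw [hs j₀ (mem_insert_self _ _)] at hfirst
    simp only [forall_mem_insert, card_insert_of_notMem hj₀]
    refine Nat.le_of_mul_le_mul_right ?_ (Nat.two_pow_pos (Fintype.card I))
    calc _ = (#{ω : I → Bool | ∃ i ∈ s j₀, ω i ≠ σ j₀ i} * 2 ^ b)
          * (#{ω : I → Bool | ∀ j ∈ B, ∃ i ∈ s j, ω i ≠ σ j i} * (2 ^ b) ^ #B) := by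
          rw [mul_mul_mul_comm, ← hindep]; ring
      _ ≤ (2 ^ Fintype.card I * (2 ^ b - 1)) * (2 ^ Fintype.card I * (2 ^ b - 1) ^ #B) :=
          Nat.mul_le_mul hfirst.le IH
      _ = _ := by ring

theorem exists_forall_exists_forall_eq {ι J : Type*} [Fintype ι] [Fintype J]
    (s : ι → J → Finset I) (σ : ι → J → I → Bool) {b : ℕ} (hs : ∀ x j, #(s x j) = b)
    (hdisj : ∀ x, Pairwise (Disjoint on s x))
    (hlt : Fintype.card ι * (2 ^ b - 1) ^ Fintype.card J < (2 ^ b) ^ Fintype.card J) :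
    ∃ ω : I → Bool, ∀ x, ∃ j, ∀ i ∈ s x j, ω i = σ x j i := by
  by_contra! hbad
  have hcover : (univ : Finset (I → Bool))
      ⊆ univ.biUnion fun x => {ω | ∀ j ∈ (univ : Finset J), ∃ i ∈ s x j, ω i ≠ σ x j i} := by
    intro ω _
    obtain ⟨x, hx⟩ := hbad ω
    simpa using ⟨x, hx⟩
  have hbound (x : ι) := card_filter_forall_exists_ne_mul_le univ (s x) (σ x)
    (fun j _ => hs x j) ((hdisj x).set_pairwise _)
  rw [card_univ] at hbound
  have := calc 2 ^ Fintype.card I * (2 ^ b) ^ Fintype.card J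
      = #(univ : Finset (I → Bool)) * (2 ^ b) ^ Fintype.card J := by simp
    _ ≤ ∑ x, #{ω : I → Bool | ∀ j ∈ (univ : Finset J), ∃ i ∈ s x j, ω i ≠ σ x j i}
          * (2 ^ b) ^ Fintype.card J := by
        rw [← sum_mul]
        exact Nat.mul_le_mul_right _ ((card_le_card hcover).trans card_biUnion_le)
    _ ≤ ∑ _x : ι, 2 ^ Fintype.card I * (2 ^ b - 1) ^ Fintype.card J :=
        sum_le_sum fun x _ => hbound x
    _ = 2 ^ Fintype.card I * (Fintype.card ι * (2 ^ b - 1) ^ Fintype.card J) := by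
        rw [sum_const, card_univ, smul_eq_mul]; ring
  exact (Nat.mul_le_mul_left_iff (Nat.two_pow_pos _)).mp this |>.not_gt hlt

end Counting

section GridLines

variable {V F X : Type*} [Field F]

def gridLine (c : V ↪ F) (β : F × F) : V ↪ V × F :=
  ⟨fun v => (v, β.1 + c v * β.2), fun _ _ h => congrArg Prod.fst h⟩

theorem eq_of_gridLine_eq_of_gridLine_eq (c : V ↪ F) {β β' : F × F} {u v : V} (huv : u ≠ v)
    (hu : gridLine c β u = gridLine c β' u) (hv : gridLine c β v = gridLine c β' v) :
    β = β' := by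
  have hu₂ : β.1 + c u * β.2 = β'.1 + c u * β'.2 := congrArg Prod.snd hu
  have hv₂ : β.1 + c v * β.2 = β'.1 + c v * β'.2 := congrArg Prod.snd hv
  have hslope : β.2 = β'.2 := by
    have : (c u - c v) * (β.2 - β'.2) = 0 := by linear_combination hu₂ - hv₂
    simpa [sub_eq_zero, c.injective.ne huv] using this
  exact Prod.ext (by simpa [hslope] using hu₂) hslope

theorem disjoint_map_top_gridLine (c : V ↪ F) (ι : V × F ↪ X) {β β' : F × F} (h : β ≠ β') :
    Disjoint ((⊤ : SimpleGraph V).map ((gridLine c β).trans ι))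
      ((⊤ : SimpleGraph V).map ((gridLine c β').trans ι)) := by
  rw [disjoint_iff_inf_le]
  rintro x y ⟨hx, hy⟩
  obtain ⟨u, v, huv, rfl, rfl⟩ := (map_adj _ _ _ _).mp hx
  obtain ⟨u', v', -, hu, hv⟩ := (map_adj _ _ _ _).mp hy
  have hu := ι.injective hu
  have hv := ι.injective hv
  obtain rfl : u' = u := congrArg Prod.fst hu
  obtain rfl : v' = v := congrArg Prod.fst hv
  exact h (eq_of_gridLine_eq_of_gridLine_eq c huv hu.symm hv.symm)

end GridLines

theorem SimpleGraph.exists_embedding_fromEdgeSet {V X : Type*} (H : SimpleGraph V) (f : V ↪ X)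
    (E : Set (Sym2 X)) (h : ∀ u v, u ≠ v → (s(f u, f v) ∈ E ↔ H.Adj u v)) :
    ∃ g : H ↪g fromEdgeSet E, ⇑g = f :=
  ⟨⟨f, fun {u v} => by
    rw [fromEdgeSet_adj, f.injective.ne_iff]
    by_cases huv : u = v
    · simp [huv]
    · simp [huv, h u v huv]⟩, rfl⟩

theorem exists_graph_forall_card_le_exists_embedding {V X : Type*} [Fintype V] [Fintype X]
    (H : SimpleGraph V) (F : Type*) [Field F] [Fintype F] (hVF : Fintype.card V ≤ Fintype.card F)
    (hlt : Fintype.card X ^ (Fintype.card V * Fintype.card F)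
        * (2 ^ (Fintype.card V).choose 2 - 1) ^ (Fintype.card F ^ 2)
      < (2 ^ (Fintype.card V).choose 2) ^ (Fintype.card F ^ 2)) :
    ∃ G : SimpleGraph X, ∀ W : Finset X, Fintype.card V * Fintype.card F ≤ #W →
      ∃ f : H ↪g G, ∀ v, f v ∈ W := by
  classical
  obtain ⟨c⟩ : Nonempty (V ↪ F) := Embedding.nonempty_of_card_le hVF
  have hcount : Fintype.card (V × F ↪ X) * (2 ^ (Fintype.card V).choose 2 - 1)
      ^ Fintype.card (F × F) < (2 ^ (Fintype.card V).choose 2) ^ Fintype.card (F × F) := by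
    rw [Fintype.card_embedding_eq, Fintype.card_prod, Fintype.card_prod, ← sq]
    exact (Nat.mul_le_mul_right _ (Nat.descFactorial_le_pow _ _)).trans_lt hlt
  let f (ι : V × F ↪ X) (β : F × F) : V ↪ X := (gridLine c β).trans ι
  obtain ⟨ω, hω⟩ := exists_forall_exists_forall_eq
    (fun ι β => ((⊤ : SimpleGraph V).map (f ι β)).edgeFinset)
    (fun ι β e => decide (e ∈ (H.map (f ι β)).edgeSet)) (b := (Fintype.card V).choose 2)
    (fun ι β => by rw [card_edgeFinset_map, card_edgeFinset_top_eq_card_choose_two])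
    (fun ι β β' h => disjoint_edgeFinset.mpr (disjoint_map_top_gridLine c ι h))
    hcount
  refine ⟨fromEdgeSet {e | ω e}, fun W hW => ?_⟩
  obtain ⟨ι⟩ : Nonempty (V × F ↪ W) := Embedding.nonempty_of_card_le (by simpa using hW)
  let ιW := ι.trans (Embedding.subtype (· ∈ W))
  obtain ⟨β, hβ⟩ := hω ιW
  obtain ⟨g, hg⟩ := H.exists_embedding_fromEdgeSet (f ιW β) {e | ω e} fun u v huv => by
    have := hβ s(f ιW β u, f ιW β v) (by rw [mem_edgeFinset, mem_edgeSet, map_adj_apply]; exact huv)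
    simp [this]
  exact ⟨g, fun v => by simp [hg, f, ιW]⟩


theorem pow_mul_two_pow_sub_one_pow_lt {n k b t : ℕ} (hn : 0 < n)
    (ht : (k : ℝ) * 2 ^ b * log n < t) :
    n ^ (k * t) * (2 ^ b - 1) ^ (t ^ 2) < (2 ^ b) ^ (t ^ 2) := by
  set q : ℝ := 2 ^ b
  have hq : 1 ≤ q := one_le_pow₀ one_le_two
  have hq0 : 0 < q := by positivity
  have ht0 : 0 < (t : ℝ) := lt_of_le_of_lt (by positivity) ht
  have hexponent : (k : ℝ) * t * log n < t ^ 2 * q⁻¹ := by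
    rw [← div_eq_mul_inv, lt_div_iff₀ hq0]
    nlinarith
  have hsmall : (n : ℝ) ^ (k * t) * (1 - q⁻¹) ^ (t ^ 2) < 1 := calc
    _ ≤ exp (log n) ^ (k * t) * exp (-q⁻¹) ^ (t ^ 2) := by
        rw [exp_log (by positivity)]
        gcongr
        · exact sub_nonneg.mpr (inv_le_one_of_one_le₀ hq)
        · exact one_sub_le_exp_neg _
    _ = exp (k * t * log n - t ^ 2 * q⁻¹) := by
        rw [← exp_nat_mul, ← exp_nat_mul, ← exp_add]; push_cast; ring_nf
    _ < 1 := exp_lt_one_iff.mpr (sub_neg.mpr hexponent)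
  rw [← Nat.cast_lt (α := ℝ)]
  push_cast [Nat.cast_sub Nat.one_le_two_pow]
  calc (n : ℝ) ^ (k * t) * (q - 1) ^ (t ^ 2)
      = q ^ (t ^ 2) * ((n : ℝ) ^ (k * t) * (1 - q⁻¹) ^ (t ^ 2)) := by
        rw [mul_left_comm, ← mul_pow, mul_sub, mul_one, mul_inv_cancel₀ hq0.ne']
    _ < q ^ (t ^ 2) := mul_lt_of_lt_one_right (by positivity) hsmall

theorem mul_le_of_le_two_mul_ceil_add {k b n t : ℕ} (hk : 1 ≤ k) (hn : 2 ≤ n)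
    (ht : t ≤ 2 * (⌈(k : ℝ) * 2 ^ b * log n⌉₊ + k)) :
    ((k * t : ℕ) : ℝ) ≤ 10 * k ^ 2 * 2 ^ b * log n := by
  have hlog : 1 / 2 < log n := calc
    (1 / 2 : ℝ) < log 2 := by linarith [log_two_gt_d9]
    _ ≤ log n := log_le_log two_pos (by exact_mod_cast hn)
  have hk1 : (1 : ℝ) ≤ k := by exact_mod_cast hk
  have hy : 1 / 2 < (2 : ℝ) ^ b * log n := by nlinarith [one_le_pow₀ (M₀ := ℝ) (n := b) one_le_two]
  have hceil := Nat.ceil_lt_add_one (show 0 ≤ (k : ℝ) * 2 ^ b * log n by positivity)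
  have ht' : (t : ℝ) ≤ 2 * (⌈(k : ℝ) * 2 ^ b * log n⌉₊ + k) := by exact_mod_cast ht
  push_cast
  calc (k : ℝ) * t ≤ k * (2 * (k * 2 ^ b * log n + 1 + k)) := by gcongr; linarith
    _ = 2 * k ^ 2 * 2 ^ b * log n + (2 * k + 2 * k ^ 2) := by ring
    _ ≤ 2 * k ^ 2 * 2 ^ b * log n + 8 * k ^ 2 * (2 ^ b * log n) := by
        gcongr
        nlinarith [sq_nonneg (k : ℝ)]
    _ = 10 * k ^ 2 * 2 ^ b * log n := by ring

theorem stmt4 :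
    ∃ c' : ℝ, 0 < c' ∧
      ∀ (k : ℕ), 1 ≤ k →
        ∀ (V : Type) [Fintype V], ∀ (H : SimpleGraph V), Fintype.card V = k →
          ∃ (C : ℝ) (n₀ : ℕ),
            0 < C ∧ C ≤ c' * (k : ℝ) ^ 2 * 2 ^ (k * (k - 1) / 2) ∧
            (n₀ : ℝ) ≤ c' * (k : ℝ) ^ 3 * 2 ^ (k * (k - 1) / 2) ∧
            ∀ n : ℕ, n₀ < n →
              ∃ G : SimpleGraph (Fin n),
                ∀ W : Finset (Fin n), C * Real.log n ≤ (W.card : ℝ) →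
                  ∃ f : H ↪g G, ∀ v, f v ∈ W := by
  refine ⟨10, by norm_num, fun k hk V _ H hV => ?_⟩
  have hk1 : (1 : ℝ) ≤ k := by exact_mod_cast hk
  refine ⟨10 * k ^ 2 * 2 ^ (k * (k - 1) / 2), 1, by positivity, le_rfl, ?_, fun n hn => ?_⟩
  · have : (1 : ℝ) ≤ k ^ 3 * 2 ^ (k * (k - 1) / 2) :=
      one_le_mul_of_one_le_of_one_le (one_le_pow₀ hk1) (one_le_pow₀ one_le_two)
    push_cast; linarith
  obtain ⟨t, ht_prime, ht_gt, ht_le⟩ := Nat.exists_prime_lt_and_le_two_mul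
    (⌈(k : ℝ) * 2 ^ (k * (k - 1) / 2) * log n⌉₊ + k) (by omega)
  have : Fact t.Prime := ⟨ht_prime⟩
  obtain ⟨G, hG⟩ := exists_graph_forall_card_le_exists_embedding (X := Fin n) H (ZMod t)
    (by rw [hV, ZMod.card]; omega) (by
    rw [Fintype.card_fin, hV, ZMod.card, Nat.choose_two_right]
    exact pow_mul_two_pow_sub_one_pow_lt (by omega)
      ((Nat.le_ceil _).trans_lt (by exact_mod_cast (Nat.le_add_right _ k).trans_lt ht_gt)))
  refine ⟨G, fun W hW => hG W ?_⟩
  rw [hV, ZMod.card]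
  exact_mod_cast (mul_le_of_le_two_mul_ceil_add hk hn ht_le).trans hW
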